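/- Let r(t) = A(t)/B(t) and θ(t) = C(t)/D(t) both be nonconstant. Then the polar-rational curve is not contained in any real algebraic curve: for every nonzero polynomial g ∈ ℝ[x,y] there exists t ∈ Ω such that g(r(t)·cos(θ(t)), r(t)·sin(θ(t))) ≠ 0. (Consequently, the only real algebraic curves that are rational in polar coordinates are circles centered at the origin, which force r constant, and lines through the origin, which force θ constant.) -/

import Mathlib

/-!
With `z = e^{iφ}` one has `cos φ = (z + z⁻¹)/2` and `sin φ = (z - z⁻¹)/(2i)`, so
`g(ρ cos φ, ρ sin φ) = ∑ₙ hₙ(ρ) e^{inφ}` for a nonzero Laurent polynomial `∑ₙ hₙ zⁿ` with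
coefficients `hₙ ∈ ℂ[ρ]`. It therefore suffices that the functions `e^{inθ(t)}` are linearly
independent over `ℂ(t)` and that `h(r(t))` vanishes identically only for `h = 0`; the latter
holds because a nonconstant rational function takes each value finitely often. For the former,
differentiate a vanishing combination `∑ Pₙ e^{inθ}` and eliminate one term: this gives a
shorter vanishing combination with coefficients `D² W(Pₘ, Pₙ) + i(n - m) W(D, C) Pₘ Pₙ`, where
`W` is the Wronskian. These cannot all vanish, since `θ' = W(D, C)/D²` is never a nonzero
constant multiple of a logarithmic derivative `W(P, R)/(PR)`.
-/

open Polynomial Filter Complex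
open scoped LaurentPolynomial

theorem IsCoprime.wronskian_ne_zero {R : Type*} [CommRing R] [IsDomain R] [CharZero R]
    {a b : R[X]} (h : IsCoprime a b) (hab : ¬(a.natDegree = 0 ∧ b.natDegree = 0)) :
    wronskian a b ≠ 0 := by
  rwa [Ne, h.wronskian_eq_zero_iff, derivative_eq_zero, derivative_eq_zero]

namespace Polynomial

theorem pow_dvd_wronskian {R : Type*} [CommRing R] {a b x : R[X]} {m n : ℕ}
    (ha : x ^ m ∣ a) (hb : x ^ n ∣ b) : x ^ (m + n - 1) ∣ wronskian a b := by
  refine dvd_sub ?_ ?_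
  · exact (pow_dvd_pow x (by omega)).trans
      ((pow_add x m (n - 1)).symm ▸ mul_dvd_mul ha (pow_sub_one_dvd_derivative_of_pow_dvd hb))
  · exact (pow_dvd_pow x (by omega)).trans
      ((pow_add x (m - 1) n).symm ▸ mul_dvd_mul (pow_sub_one_dvd_derivative_of_pow_dvd ha) hb)

theorem rootMultiplicity_wronskian_lt {R : Type*} [CommRing R] [IsDomain R] [CharZero R]
    {c d : R[X]} {α : R} (hd : d ≠ 0) (hdα : d.IsRoot α) (hcα : ¬c.IsRoot α) :
    (wronskian d c).rootMultiplicity α < d.rootMultiplicity α := by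
  set m := d.rootMultiplicity α
  have hm : 0 < m := (rootMultiplicity_pos hd).2 hdα
  have hc : c ≠ 0 := by rintro rfl; exact hcα (by simp)
  have hd' : derivative d ≠ 0 := by
    rw [Ne, derivative_eq_zero, ← Ne, ← Nat.pos_iff_ne_zero, natDegree_pos_iff_degree_pos]
    exact degree_pos_of_root hd hdα
  by_contra! hle
  have hdvd : (X - C α) ^ m ∣ derivative d * c := by
    have h₁ : (X - C α) ^ m ∣ wronskian d c :=
      (pow_dvd_pow _ hle).trans (pow_rootMultiplicity_dvd _ _)
    have h₂ : (X - C α) ^ m ∣ d * derivative c := (pow_rootMultiplicity_dvd _ _).mul_right _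
    simpa [wronskian] using dvd_sub h₂ h₁
  have := (le_rootMultiplicity_iff (mul_ne_zero hd' hc)).2 hdvd
  rw [rootMultiplicity_mul (mul_ne_zero hd' hc), derivative_rootMultiplicity_of_root hdα,
    rootMultiplicity_eq_zero hcα] at this
  omega

/-- At a root of `d` the left side vanishes to higher order than the right side; if `d` is
constant, the right side has the larger degree. -/
theorem eq_zero_of_sq_mul_wronskian_eq {K : Type*} [Field K] [IsAlgClosed K] [CharZero K]
    {c d p q : K[X]} {κ : K} (hcd : IsCoprime c d) (hw : wronskian d c ≠ 0) (hp : p ≠ 0)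
    (hq : q ≠ 0) (h : d ^ 2 * wronskian p q = C κ * (wronskian d c * (p * q))) : κ = 0 := by
  by_contra hκ
  have hR : C κ * (wronskian d c * (p * q)) ≠ 0 := by simp [hκ, hw, hp, hq]
  have hL : d ^ 2 * wronskian p q ≠ 0 := h ▸ hR
  have hd : d ≠ 0 := by rintro rfl; simp at hw
  have hW : wronskian p q ≠ 0 := right_ne_zero_of_mul hL
  rcases eq_or_ne d.natDegree 0 with hd0 | hd0
  · have hdeg := congrArg natDegree h
    rw [natDegree_mul (pow_ne_zero 2 hd) hW, natDegree_pow, hd0, natDegree_C_mul hκ,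
      natDegree_mul hw (mul_ne_zero hp hq), natDegree_mul hp hq] at hdeg
    have := natDegree_wronskian_lt_add hW
    omega
  · obtain ⟨α, hα⟩ :=
      IsAlgClosed.exists_root d (by rwa [degree_eq_natDegree hd, Nat.cast_ne_zero])
    have hcα : ¬c.IsRoot α := by simpa [hα.eq_zero] using aeval_ne_zero_of_isCoprime hcd α
    have hlow : d.rootMultiplicity α + d.rootMultiplicity α +
        (p.rootMultiplicity α + q.rootMultiplicity α - 1) ≤
          (d ^ 2 * wronskian p q).rootMultiplicity α := by
      rw [le_rootMultiplicity_iff hL, pow_add, pow_add, sq]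
      exact mul_dvd_mul (mul_dvd_mul (pow_rootMultiplicity_dvd _ _) (pow_rootMultiplicity_dvd _ _))
        (pow_dvd_wronskian (pow_rootMultiplicity_dvd _ _) (pow_rootMultiplicity_dvd _ _))
    rw [h, rootMultiplicity_mul hR, rootMultiplicity_C,
      rootMultiplicity_mul (right_ne_zero_of_mul hR), rootMultiplicity_mul (mul_ne_zero hp hq)]
      at hlow
    have := rootMultiplicity_wronskian_lt hd hα hcα
    have := (rootMultiplicity_pos hd).2 hα
    omega

theorem sub_C_mul_ne_zero_of_isCoprime {R : Type*} [CommRing R] [IsDomain R] {a b : R[X]}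
    (hab : IsCoprime a b) (hnc : ¬(a.natDegree = 0 ∧ b.natDegree = 0)) (w : R) :
    a - C w * b ≠ 0 := by
  intro h
  rw [sub_eq_zero] at h
  have hb : b.natDegree = 0 :=
    natDegree_eq_zero_of_isUnit (hab.isUnit_of_dvd' (h ▸ dvd_mul_left b (C w)) dvd_rfl)
  exact hnc ⟨Nat.le_zero.1 (h ▸ hb ▸ natDegree_C_mul_le w b), hb⟩

theorem finite_setOf_eval_div_mem {k : Type*} [Field k] {a b : k[X]} (hab : IsCoprime a b)
    (hnc : ¬(a.natDegree = 0 ∧ b.natDegree = 0)) {s : Set k} (hs : s.Finite) :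
    {z | b.eval z ≠ 0 ∧ a.eval z / b.eval z ∈ s}.Finite := by
  refine (hs.biUnion fun w _ =>
    (a - C w * b).finite_setOfPred_isRoot (sub_C_mul_ne_zero_of_isCoprime hab hnc w)).subset ?_
  rintro z ⟨hz, hzs⟩
  refine Set.mem_biUnion hzs ?_
  simp [div_mul_cancel₀ _ hz]

theorem eval_aeval_homogenize {k : Type*} [Field k] {p : k[X]} {n : ℕ} (hn : p.natDegree ≤ n)
    (a b : k[X]) {z : k} (hz : b.eval z ≠ 0) :
    (MvPolynomial.aeval ![a, b] (p.homogenize n)).eval z =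
      p.eval (a.eval z / b.eval z) * b.eval z ^ n := by
  rw [← coe_aeval_eq_eval, MvPolynomial.comp_aeval_apply]
  refine (eval_homogenize hn (fun i => aeval z (![a, b] i)) (by simpa using hz)).trans ?_
  simp

theorem eventually_cofinite_eval_ne_zero {R K : Type*} [CommRing K] [IsDomain K]
    {p : K[X]} (hp : p ≠ 0) {f : R → K} (hf : f.Injective) :
    ∀ᶠ t in cofinite, p.eval (f t) ≠ 0 :=
  eventually_cofinite.2 <| by simpa using (p.finite_setOfPred_isRoot hp).preimage hf.injOn

theorem eval_map_ofRealHom (p : ℝ[X]) (t : ℝ) : (p.map ofRealHom).eval (t : ℂ) = p.eval t :=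
  eval_map_apply ofRealHom t

end Polynomial

theorem eventually_cofinite_deriv_eq_zero {𝕜 F : Type*} [NontriviallyNormedField 𝕜]
    [NormedAddCommGroup F] [NormedSpace 𝕜 F] {f : 𝕜 → F} (h : ∀ᶠ x in cofinite, f x = 0) :
    ∀ᶠ x in cofinite, deriv f x = 0 := by
  have hs : {x | ¬f x = 0}.Finite := eventually_cofinite.1 h
  filter_upwards [hs.eventually_cofinite_notMem] with x hx
  have hf : f =ᶠ[nhds x] fun _ => 0 :=
    mem_of_superset (hs.isClosed.isOpen_compl.mem_nhds hx) fun y hy => not_not.1 hy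
  simpa using hf.deriv_eq

section ExpOfRational

variable {c d : ℂ[X]}

theorem hasDerivAt_eval_div_eval {t : ℝ} (hd : d.eval (t : ℂ) ≠ 0) :
    HasDerivAt (fun s : ℝ => c.eval (s : ℂ) / d.eval (s : ℂ))
      ((wronskian d c).eval (t : ℂ) / d.eval (t : ℂ) ^ 2) t := by
  refine (((c.hasDerivAt _).comp_ofReal).fun_div ((d.hasDerivAt _).comp_ofReal) hd
    ).congr_deriv ?_
  simp only [wronskian, eval_sub, eval_mul]
  ring

theorem hasDerivAt_eval_mul_exp (p : ℂ[X]) (κ : ℂ) {t : ℝ} (hd : d.eval (t : ℂ) ≠ 0) :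
    HasDerivAt (fun s : ℝ => p.eval (s : ℂ) * exp (κ * (c.eval (s : ℂ) / d.eval (s : ℂ))))
      ((d ^ 2 * derivative p + C κ * wronskian d c * p).eval (t : ℂ) / d.eval (t : ℂ) ^ 2 *
        exp (κ * (c.eval (t : ℂ) / d.eval (t : ℂ)))) t := by
  refine (((p.hasDerivAt _).comp_ofReal).fun_mul
    (((hasDerivAt_eval_div_eval hd).const_mul κ).cexp)).congr_deriv ?_
  simp only [eval_add, eval_mul, eval_pow, eval_C]
  field_simp

theorem eventually_sum_eval_mul_exp_derivative_eq_zero (hd : d ≠ 0) {ι : Type*} (S : Finset ι)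
    (P : ι → ℂ[X]) (ω : ι → ℂ)
    (h : ∀ᶠ t : ℝ in cofinite,
      ∑ i ∈ S, (P i).eval (t : ℂ) * exp (ω i * (c.eval (t : ℂ) / d.eval (t : ℂ))) = 0) :
    ∀ᶠ t : ℝ in cofinite,
      ∑ i ∈ S, (d ^ 2 * derivative (P i) + C (ω i) * wronskian d c * P i).eval (t : ℂ) *
        exp (ω i * (c.eval (t : ℂ) / d.eval (t : ℂ))) = 0 := by
  filter_upwards [eventually_cofinite_deriv_eq_zero h,
    eventually_cofinite_eval_ne_zero hd ofReal_injective] with t ht hdt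
  rw [(HasDerivAt.fun_sum fun i _ => hasDerivAt_eval_mul_exp (P i) (ω i) hdt).deriv] at ht
  rw [← mul_zero (d.eval (t : ℂ) ^ 2), ← ht, Finset.mul_sum]
  refine Finset.sum_congr rfl fun i _ => ?_
  field_simp

theorem eq_zero_of_eventually_sum_eval_mul_exp_eq_zero (hcd : IsCoprime c d)
    (hw : wronskian d c ≠ 0) {ι : Type*} {ω : ι → ℂ} {S : Finset ι} (hω : Set.InjOn ω S)
    (P : ι → ℂ[X])
    (h : ∀ᶠ t : ℝ in cofinite,
      ∑ i ∈ S, (P i).eval (t : ℂ) * exp (ω i * (c.eval (t : ℂ) / d.eval (t : ℂ))) = 0) :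
    ∀ i ∈ S, P i = 0 := by
  classical
  have hd : d ≠ 0 := by rintro rfl; simp at hw
  induction S using Finset.induction_on generalizing P with
  | empty => simp
  | insert i₀ S hi₀ ih =>
    set L : ι → ℂ[X] := fun i => d ^ 2 * derivative (P i) + C (ω i) * wronskian d c * P i
    have ih := ih (hω.mono (Finset.subset_insert _ _))
    have hL := eventually_sum_eval_mul_exp_derivative_eq_zero hd _ P ω h
    -- with `eᵢ = exp (ω i * θ)`, the `i₀` terms cancel in `P i₀ * ∑ L i eᵢ - L i₀ * ∑ P i eᵢ`
    have hQ : ∀ i ∈ S, P i₀ * L i - L i₀ * P i = 0 := by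
      refine ih _ ?_
      filter_upwards [h, hL] with t h₁ h₂
      rw [Finset.sum_insert hi₀] at h₁ h₂
      simp only [eval_sub, eval_mul, sub_mul, Finset.sum_sub_distrib, mul_assoc,
        ← Finset.mul_sum]
      linear_combination (P i₀).eval (t : ℂ) * h₂ - (L i₀).eval (t : ℂ) * h₁
    have hP₀ : P i₀ = 0 := by
      by_contra hP₀
      have hPS : ∀ i ∈ S, P i = 0 := fun i hi => by
        by_contra hPi
        refine sub_ne_zero.2 (hω.ne (Finset.mem_insert_self _ _) (Finset.mem_insert_of_mem hi) ?_)
          (eq_zero_of_sq_mul_wronskian_eq hcd hw hP₀ hPi ?_)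
        · rintro rfl; exact hi₀ hi
        · rw [wronskian, map_sub]
          linear_combination hQ i hi
      obtain ⟨t, ht, hP₀t⟩ :=
        (h.and (eventually_cofinite_eval_ne_zero hP₀ ofReal_injective)).exists
      rw [Finset.sum_insert hi₀, Finset.sum_eq_zero fun i hi => by simp [hPS i hi]] at ht
      simp [exp_ne_zero, hP₀t] at ht
    refine Finset.forall_mem_insert _ _ _ |>.2 ⟨hP₀, ih P ?_⟩
    filter_upwards [h] with t ht
    simpa [Finset.sum_insert hi₀, hP₀] using ht

end ExpOfRational

theorem eq_zero_of_eventually_eval_div_eq_zero {A B : ℝ[X]} (hAB : IsCoprime A B)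
    (hr : ¬(A.natDegree = 0 ∧ B.natDegree = 0)) {p : ℂ[X]}
    (h : ∀ᶠ t : ℝ in cofinite,
      B.eval t ≠ 0 ∧ p.eval ((A.eval t / B.eval t : ℝ) : ℂ) = 0) :
    p = 0 := by
  by_contra hp
  have hfin := finite_setOf_eval_div_mem hAB hr
    ((p.finite_setOfPred_isRoot hp).preimage ofReal_injective.injOn)
  obtain ⟨t, ht, hnot⟩ := (h.and hfin.eventually_cofinite_notMem).exists
  exact hnot ht

theorem eq_zero_of_eventually_sum_eval_div_mul_exp_eq_zero {A B C D : ℝ[X]} (hB : B ≠ 0)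
    (hAB : IsCoprime A B) (hr : ¬(A.natDegree = 0 ∧ B.natDegree = 0)) (hCD : IsCoprime C D)
    (hθ : ¬(C.natDegree = 0 ∧ D.natDegree = 0)) {ι : Type*} {ω : ι → ℂ} {S : Finset ι}
    (hω : Set.InjOn ω S) (h : ι → ℂ[X])
    (hsum : ∀ᶠ t : ℝ in cofinite, ∑ i ∈ S,
      (h i).eval ((A.eval t / B.eval t : ℝ) : ℂ) * exp (ω i * (C.eval t / D.eval t : ℝ)) = 0) :
    ∀ i ∈ S, h i = 0 := by
  set K := S.sup fun i => (h i).natDegree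
  set P : ι → ℂ[X] := fun i =>
    MvPolynomial.aeval ![A.map ofRealHom, B.map ofRealHom] ((h i).homogenize K)
  have hP : ∀ i ∈ S, ∀ t : ℝ, B.eval t ≠ 0 → (P i).eval (t : ℂ) =
      (h i).eval ((A.eval t / B.eval t : ℝ) : ℂ) * ((B.eval t : ℝ) : ℂ) ^ K := by
    intro i hi t ht
    rw [eval_aeval_homogenize (Finset.le_sup (f := fun i => (h i).natDegree) hi) _ _
      (by rwa [eval_map_ofRealHom, ofReal_ne_zero]), eval_map_ofRealHom, eval_map_ofRealHom,
      ofReal_div]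
  have hP₀ : ∀ i ∈ S, P i = 0 := by
    refine eq_zero_of_eventually_sum_eval_mul_exp_eq_zero
      (by simpa using hCD.map (mapRingHom ofRealHom))
      ((by simpa using hCD.symm.map (mapRingHom ofRealHom) : IsCoprime _ _).wronskian_ne_zero
        (by simpa [and_comm] using hθ)) hω P ?_
    filter_upwards [hsum, eventually_cofinite_eval_ne_zero hB Function.injective_id]
      with t ht hBt
    rw [← mul_zero (((B.eval t : ℝ) : ℂ) ^ K), ← ht, Finset.mul_sum]
    refine Finset.sum_congr rfl fun i hi => ?_
    rw [hP i hi t hBt, eval_map_ofRealHom, eval_map_ofRealHom]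
    push_cast
    ring
  refine fun i hi => eq_zero_of_eventually_eval_div_eq_zero hAB hr ?_
  filter_upwards [eventually_cofinite_eval_ne_zero hB Function.injective_id] with t hBt
  have := hP i hi t hBt
  rw [hP₀ i hi, eval_zero, eq_comm] at this
  exact ⟨hBt, (mul_eq_zero.1 this).resolve_right (pow_ne_zero _ (ofReal_ne_zero.2 hBt))⟩

/-- Substitutes `x = ρ (z + z⁻¹)/2` and `y = ρ (z - z⁻¹)/(2i)`, with `ρ` the polynomial variable
and `z` the Laurent variable; at `z = e^{iφ}` these are `ρ cos φ` and `ρ sin φ`. -/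
noncomputable def polarLaurent : MvPolynomial (Fin 2) ℝ →ₐ[ℝ] ℂ[X][T;T⁻¹] :=
  MvPolynomial.aeval
    ![LaurentPolynomial.C (C 2⁻¹ * X) * (LaurentPolynomial.T 1 + LaurentPolynomial.T (-1)),
      LaurentPolynomial.C (C (2 * I)⁻¹ * X) *
        (LaurentPolynomial.T 1 - LaurentPolynomial.T (-1))]

theorem LaurentPolynomial.eval₂_eq_sum {R S : Type*} [CommSemiring R] [CommSemiring S]
    (f : R →+* S) (x : Sˣ) (p : R[T;T⁻¹]) :
    LaurentPolynomial.eval₂ f x p = p.coeff.sum fun n r => f r * ↑(x ^ n) := by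
  conv_lhs => rw [← AddMonoidAlgebra.sum_coeff_single p]
  simp [Finsupp.sum, single_eq_C_mul_T]

theorem eval₂_polarLaurent (g : MvPolynomial (Fin 2) ℝ) (ρ φ : ℝ) :
    LaurentPolynomial.eval₂ (evalRingHom (ρ : ℂ)) (Units.mk0 (exp (φ * I)) (exp_ne_zero _))
      (polarLaurent g) = MvPolynomial.eval ![ρ * Real.cos φ, ρ * Real.sin φ] g := by
  suffices (LaurentPolynomial.eval₂ (evalRingHom (ρ : ℂ))
      (Units.mk0 (exp (φ * I)) (exp_ne_zero _))).comp polarLaurent.toRingHom =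
      ofRealHom.comp (MvPolynomial.eval ![ρ * Real.cos φ, ρ * Real.sin φ]) from
    congr($this g)
  refine MvPolynomial.ringHom_ext (fun r => by simp [polarLaurent]) (fun i => ?_)
  have hinv : (exp (φ * I))⁻¹ = exp (-(φ * I)) := (exp_neg _).symm
  fin_cases i
  · simp [polarLaurent, hinv, Complex.cos]
    ring
  · simp [polarLaurent, hinv, Complex.sin]
    ring

theorem ofReal_eval_polar_eq_sum (g : MvPolynomial (Fin 2) ℝ) (ρ φ : ℝ) :
    (MvPolynomial.eval ![ρ * Real.cos φ, ρ * Real.sin φ] g : ℂ) =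
      ∑ n ∈ (polarLaurent g).coeff.support,
        ((polarLaurent g).coeff n).eval (ρ : ℂ) * exp (n * I * φ) := by
  rw [← eval₂_polarLaurent, LaurentPolynomial.eval₂_eq_sum, Finsupp.sum]
  refine Finset.sum_congr rfl fun n _ => ?_
  rw [Units.val_zpow_eq_zpow_val, Units.val_mk0, ← exp_int_mul, coe_evalRingHom]
  ring_nf

theorem polarLaurent_eq_zero_iff (g : MvPolynomial (Fin 2) ℝ) : polarLaurent g = 0 ↔ g = 0 := by
  refine ⟨fun h => MvPolynomial.funext fun x => ?_, fun h => by rw [h, map_zero]⟩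
  set z : ℂ := ⟨x 0, x 1⟩
  have hx : x = ![‖z‖ * Real.cos z.arg, ‖z‖ * Real.sin z.arg] := by
    rw [norm_mul_cos_arg, norm_mul_sin_arg]
    ext i; fin_cases i <;> rfl
  have := eval₂_polarLaurent g ‖z‖ z.arg
  rw [h, map_zero, ← hx] at this
  simpa using this.symm

theorem polar_rational_not_algebraic
    (A B C D : Polynomial ℝ) (hB : B ≠ 0) (hD : D ≠ 0)
    (hAB : IsCoprime A B) (hCD : IsCoprime C D)
    (hr : ¬ (A.natDegree = 0 ∧ B.natDegree = 0))
    (hθ : ¬ (C.natDegree = 0 ∧ D.natDegree = 0)) :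
    ∀ g : MvPolynomial (Fin 2) ℝ, g ≠ 0 →
      ∃ t : ℝ, B.eval t ≠ 0 ∧ D.eval t ≠ 0 ∧
        MvPolynomial.eval
          ![(A.eval t / B.eval t) * Real.cos (C.eval t / D.eval t),
            (A.eval t / B.eval t) * Real.sin (C.eval t / D.eval t)] g ≠ 0 := by
  intro g hg
  by_contra! hcurve
  obtain ⟨n, hn⟩ : (polarLaurent g).coeff.support.Nonempty := by
    simpa [Finsupp.support_nonempty_iff, polarLaurent_eq_zero_iff] using hg
  refine Finsupp.mem_support_iff.1 hn <| eq_zero_of_eventually_sum_eval_div_mul_exp_eq_zero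
    hB hAB hr hCD hθ (ω := fun n : ℤ => n * I) (fun _ _ _ _ h => by simpa using h) _ ?_ n hn
  filter_upwards [eventually_cofinite_eval_ne_zero hB Function.injective_id,
    eventually_cofinite_eval_ne_zero hD Function.injective_id] with t hBt hDt
  rw [← ofReal_eval_polar_eq_sum, hcurve t hBt hDt, ofReal_zero]
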